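/- arXiv:2507.19767 — 2 statements merged into one kernel-verified Lean document; each statement's English description precedes it below -/
import Mathlib

section
/- Let p > 1 be real, n ∈ ℕ, and let f(z) = Σ_{j≥0} c_j z^j be holomorphic, bounded, and zero-free on 𝔻, and assume f is not a polynomial of degree at most n. Then there exist ε₀ > 0 and C > 0 such that for every ε ∈ (0, ε₀) and every d = (d₀, …, dₙ) ∈ ℂ^{n+1} with |d| ≤ ε, there exists a holomorphic, bounded, zero-free function f* on 𝔻 whose Taylor coefficients satisfy c_j(f*) = c_j + d_j for all j = 0, 1, …, n, and whose Hardy norm satisfies | ‖f*‖_p − ‖f‖_p | ≤ C ε. -/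
open Complex Metric Set

noncomputable section

/-- The open unit disk in ℂ. -/
def unitDisk : Set ℂ := Metric.ball 0 1

/-- The `n`-th Taylor coefficient of `f` at the origin. -/
def coeff (f : ℂ → ℂ) (n : ℕ) : ℂ := iteratedDeriv n f 0 / (n.factorial : ℂ)

/-- The `p`-integral mean of `f` on the circle of radius `r`. -/
def hardyMean (p : ℝ) (f : ℂ → ℂ) (r : ℝ) : ℝ :=
  ((1 / (2 * Real.pi)) * ∫ θ in (0 : ℝ)..(2 * Real.pi),
    ‖f ((r : ℂ) * Complex.exp ((θ : ℂ) * Complex.I))‖ ^ p) ^ (1 / p)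

/-- The Hardy `H^p` norm of `f` on the unit disk. -/
def hardyNorm (p : ℝ) (f : ℂ → ℂ) : ℝ :=
  sSup {x : ℝ | ∃ r : ℝ, 0 < r ∧ r < 1 ∧ x = hardyMean p f r}

/-!
Multiplying `f` by a function `Q` with `‖Q - 1‖ ≤ δ < 1` on the disk changes every integral mean,
hence the Hardy norm, by a factor between `1 - δ` and `1 + δ`. Take for `Q` the polynomial
`1 + trunc_{n+1} (d / f)`, the quotient being formal division of power series (possible as
`f 0 ≠ 0`): the first `n + 1` Taylor coefficients of `f Q` are then `c_j + d_j`, while the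
coefficients of `d / f` up to degree `n` are `O(ε)`, so that `δ = O(ε)`.
-/

def taylorSeries (f : ℂ → ℂ) : PowerSeries ℂ := PowerSeries.mk (coeff f)

lemma coeff_zero (f : ℂ → ℂ) : coeff f 0 = f 0 := by simp [coeff]

lemma coeff_mul {f g : ℂ → ℂ} (hf : AnalyticAt ℂ f 0) (hg : AnalyticAt ℂ g 0) (k : ℕ) :
    coeff (fun z => f z * g z) k = ∑ i ∈ Finset.range (k + 1), coeff f i * coeff g (k - i) := by
  simp only [coeff, iteratedDeriv_fun_mul hf.contDiffAt hg.contDiffAt, Finset.sum_div]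
  refine Finset.sum_congr rfl fun i hi => ?_
  have hik : i ≤ k := Nat.lt_succ_iff.mp (Finset.mem_range.mp hi)
  rw [← Nat.choose_mul_factorial_mul_factorial hik]
  have hchoose : (k.choose i : ℂ) ≠ 0 := by exact_mod_cast (Nat.choose_pos hik).ne'
  push_cast
  field_simp

lemma taylorSeries_mul {f g : ℂ → ℂ} (hf : AnalyticAt ℂ f 0) (hg : AnalyticAt ℂ g 0) :
    taylorSeries (fun z => f z * g z) = taylorSeries f * taylorSeries g := by
  ext k
  rw [PowerSeries.coeff_mul, Finset.Nat.sum_antidiagonal_eq_sum_range_succ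
    (fun i j => PowerSeries.coeff i (taylorSeries f) * PowerSeries.coeff j (taylorSeries g))]
  simp [taylorSeries, coeff_mul hf hg]

lemma Polynomial.iteratedDeriv_eval {𝕜 : Type*} [NontriviallyNormedField 𝕜] (q : Polynomial 𝕜)
    (k : ℕ) :
    iteratedDeriv k (fun z => q.eval z) = fun z => (Polynomial.derivative^[k] q).eval z := by
  induction k with
  | zero => simp
  | succ k ih =>
    rw [iteratedDeriv_succ, ih, Function.iterate_succ_apply']
    ext z
    exact Polynomial.deriv _

lemma taylorSeries_polynomial_eval (q : Polynomial ℂ) :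
    taylorSeries (fun z => q.eval z) = q := by
  ext k
  simp [taylorSeries, coeff, Polynomial.iteratedDeriv_eval,
    ← Polynomial.coeff_zero_eq_eval_zero, Polynomial.coeff_iterate_derivative,
    Nat.descFactorial_self, Nat.factorial_ne_zero]

namespace PowerSeries

variable {𝕜 : Type*}

lemma coeff_mul_one_add_trunc_inv_mul [Field 𝕜] {φ : 𝕜⟦X⟧} (hφ : constantCoeff φ ≠ 0)
    (ψ : 𝕜⟦X⟧) {k n : ℕ} (hk : k ≤ n) :
    coeff k (φ * ((1 + trunc (n + 1) (φ⁻¹ * ψ) : Polynomial 𝕜) : 𝕜⟦X⟧)) =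
      coeff k φ + coeff k ψ := by
  have htrunc := congrArg (Polynomial.coeff · k) (trunc_mul_trunc (n := n + 1) φ (φ⁻¹ * ψ))
  simp only [coeff_trunc, if_pos (Nat.lt_succ_of_le hk)] at htrunc
  rw [Polynomial.coe_add, Polynomial.coe_one, mul_add, mul_one, map_add, htrunc, ← mul_assoc,
    PowerSeries.mul_inv_cancel φ hφ, one_mul]

variable [NormedField 𝕜]

lemma sum_norm_coeff_mul_le (φ ψ : 𝕜⟦X⟧) {ε : ℝ} (hψ : ∀ j, ‖coeff j ψ‖ ≤ ε) (n : ℕ) :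
    ∑ k ∈ Finset.range (n + 1), ‖coeff k (φ * ψ)‖ ≤
      (n + 1) * ε * ∑ i ∈ Finset.range (n + 1), ‖coeff i φ‖ := by
  set B := ∑ i ∈ Finset.range (n + 1), ‖coeff i φ‖
  have hcoeff : ∀ k ∈ Finset.range (n + 1), ‖coeff k (φ * ψ)‖ ≤ ε * B := by
    intro k hk
    rw [coeff_mul, Finset.Nat.sum_antidiagonal_eq_sum_range_succ (fun i j => coeff i φ * coeff j ψ)]
    calc _ ≤ ∑ i ∈ Finset.range (k + 1), ‖coeff i φ‖ * ε :=
          (norm_sum_le _ _).trans (Finset.sum_le_sum fun i _ => by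
            rw [norm_mul]; gcongr; exact hψ _)
      _ ≤ ε * B := by
          rw [← Finset.sum_mul, mul_comm]
          gcongr
          · exact (norm_nonneg _).trans (hψ 0)
          exact Finset.sum_le_sum_of_subset_of_nonneg
            (Finset.range_subset_range.mpr (Finset.mem_range.mp hk))
            fun i _ _ => norm_nonneg (coeff i φ)
  calc _ ≤ ∑ _k ∈ Finset.range (n + 1), ε * B := Finset.sum_le_sum hcoeff
    _ = _ := by simp [mul_assoc]

lemma norm_eval_trunc_le (φ : 𝕜⟦X⟧) (n : ℕ) {z : 𝕜} (hz : ‖z‖ ≤ 1) :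
    ‖(trunc (n + 1) φ).eval z‖ ≤ ∑ k ∈ Finset.range (n + 1), ‖coeff k φ‖ := by
  rw [Polynomial.eval_eq_sum_range' (natDegree_trunc_lt φ n)]
  refine (norm_sum_le _ _).trans (Finset.sum_le_sum fun k hk => ?_)
  rw [norm_mul, norm_pow, coeff_trunc, if_pos (Finset.mem_range.mp hk)]
  exact mul_le_of_le_one_right (norm_nonneg _) (pow_le_one₀ (norm_nonneg _) hz)

end PowerSeries

lemma coeff_mul_eval_one_add_trunc {f : ℂ → ℂ} (hf : AnalyticAt ℂ f 0) (hf₀ : f 0 ≠ 0)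
    (D : PowerSeries ℂ) {k n : ℕ} (hk : k ≤ n) :
    coeff (fun z => f z *
        (1 + PowerSeries.trunc (n + 1) ((taylorSeries f)⁻¹ * D)).eval z) k =
      coeff f k + PowerSeries.coeff k D := by
  have hT : PowerSeries.constantCoeff (taylorSeries f) ≠ 0 := by
    simpa [taylorSeries, coeff_zero] using hf₀
  set q : Polynomial ℂ := 1 + PowerSeries.trunc (n + 1) ((taylorSeries f)⁻¹ * D)
  have := congrArg (PowerSeries.coeff k) (taylorSeries_mul hf (q.differentiable.analyticAt 0))
  rw [taylorSeries_polynomial_eval, PowerSeries.coeff_mul_one_add_trunc_inv_mul hT D hk] at this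
  simpa [taylorSeries] using this

lemma mul_exp_mem_unitDisk {r : ℝ} (hr₀ : 0 ≤ r) (hr₁ : r < 1) (θ : ℝ) :
    (r : ℂ) * Complex.exp ((θ : ℂ) * Complex.I) ∈ unitDisk := by
  simpa [unitDisk, Complex.norm_exp_ofReal_mul_I, abs_of_nonneg hr₀] using hr₁

lemma continuous_norm_rpow_on_circle {f : ℂ → ℂ} (hf : ContinuousOn f unitDisk) {r : ℝ}
    (hr₀ : 0 ≤ r) (hr₁ : r < 1) {p : ℝ} (hp : 0 < p) :
    Continuous fun θ : ℝ => ‖f ((r : ℂ) * Complex.exp ((θ : ℂ) * Complex.I))‖ ^ p :=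
  ((hf.comp_continuous (by fun_prop) (mul_exp_mem_unitDisk hr₀ hr₁)).norm.rpow_const
    fun _ => Or.inr hp.le)

lemma integral_norm_rpow_on_circle_nonneg (f : ℂ → ℂ) (p r : ℝ) :
    0 ≤ ∫ θ in (0 : ℝ)..(2 * Real.pi), ‖f ((r : ℂ) * Complex.exp ((θ : ℂ) * Complex.I))‖ ^ p :=
  intervalIntegral.integral_nonneg (by positivity) fun _ _ => by positivity

lemma hardyMean_le_mul_of_norm_le {f g : ℂ → ℂ} (hf : ContinuousOn f unitDisk)
    (hg : ContinuousOn g unitDisk) {p t : ℝ} (hp : 0 < p) (ht : 0 ≤ t)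
    (hgf : ∀ z ∈ unitDisk, ‖g z‖ ≤ t * ‖f z‖) {r : ℝ} (hr₀ : 0 ≤ r) (hr₁ : r < 1) :
    hardyMean p g r ≤ t * hardyMean p f r := by
  set z : ℝ → ℂ := fun θ => (r : ℂ) * Complex.exp ((θ : ℂ) * Complex.I)
  have hint : ∫ θ in (0 : ℝ)..(2 * Real.pi), ‖g (z θ)‖ ^ p
      ≤ t ^ p * ∫ θ in (0 : ℝ)..(2 * Real.pi), ‖f (z θ)‖ ^ p := by
    rw [← intervalIntegral.integral_const_mul]
    refine intervalIntegral.integral_mono_on (by positivity)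
      ((continuous_norm_rpow_on_circle hg hr₀ hr₁ hp).intervalIntegrable _ _)
      ((continuous_norm_rpow_on_circle hf hr₀ hr₁ hp).const_mul _ |>.intervalIntegrable _ _)
      fun θ _ => ?_
    rw [← Real.mul_rpow ht (norm_nonneg _)]
    gcongr
    exact hgf _ (mul_exp_mem_unitDisk hr₀ hr₁ θ)
  have hg₀ := integral_norm_rpow_on_circle_nonneg g p r
  have hf₀ := integral_norm_rpow_on_circle_nonneg f p r
  calc hardyMean p g r ≤ (t ^ p * ((1 / (2 * Real.pi)) *
        ∫ θ in (0 : ℝ)..(2 * Real.pi), ‖f (z θ)‖ ^ p)) ^ (1 / p) := by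
        rw [mul_left_comm]
        exact Real.rpow_le_rpow (by positivity) (by gcongr) (by positivity)
    _ = t * hardyMean p f r := by
        rw [Real.mul_rpow (by positivity) (by positivity), one_div,
          Real.rpow_rpow_inv ht hp.ne', hardyMean, one_div p]

lemma hardyMean_one (p r : ℝ) : hardyMean p (fun _ => 1) r = 1 := by
  have h2pi : Real.pi⁻¹ * 2⁻¹ * (2 * Real.pi) = 1 := by field_simp
  simp [hardyMean, h2pi]

lemma hardyNorm_nonneg (p : ℝ) (f : ℂ → ℂ) : 0 ≤ hardyNorm p f :=
  Real.sSup_nonneg fun _ ⟨r, _, _, hx⟩ => hx ▸ Real.rpow_nonneg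
    (mul_nonneg (by positivity) (integral_norm_rpow_on_circle_nonneg f p r)) _

lemma hardyNorm_le_mul_of_norm_le {f g : ℂ → ℂ} (hf : ContinuousOn f unitDisk)
    (hfb : ∃ M, ∀ z ∈ unitDisk, ‖f z‖ ≤ M) (hg : ContinuousOn g unitDisk) {p t : ℝ}
    (hp : 0 < p) (ht : 0 ≤ t) (hgf : ∀ z ∈ unitDisk, ‖g z‖ ≤ t * ‖f z‖) :
    hardyNorm p g ≤ t * hardyNorm p f := by
  obtain ⟨M, hM⟩ := hfb
  have hM₀ : 0 ≤ M := (norm_nonneg _).trans (hM 0 (mem_ball_self one_pos))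
  have hbdd : BddAbove {x : ℝ | ∃ r : ℝ, 0 < r ∧ r < 1 ∧ x = hardyMean p f r} := by
    refine ⟨M, fun _ ⟨r, hr₀, hr₁, hx⟩ => hx ▸ ?_⟩
    simpa [hardyMean_one] using hardyMean_le_mul_of_norm_le (f := fun _ => 1) continuousOn_const
      hf hp hM₀ (fun z hz => by simpa using hM z hz) hr₀.le hr₁
  refine Real.sSup_le (fun _ ⟨r, hr₀, hr₁, hx⟩ => hx ▸ ?_)
    (mul_nonneg ht (hardyNorm_nonneg p f))
  exact (hardyMean_le_mul_of_norm_le hf hg hp ht hgf hr₀.le hr₁).trans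
    (mul_le_mul_of_nonneg_left (le_csSup hbdd ⟨r, hr₀, hr₁, rfl⟩) ht)

section NormSubOne

variable {R : Type*} [SeminormedRing R] [NormOneClass R]

lemma norm_le_one_add_of_norm_sub_one_le {x : R} {δ : ℝ} (h : ‖x - 1‖ ≤ δ) : ‖x‖ ≤ 1 + δ := by
  have := norm_le_norm_add_norm_sub' x 1
  rw [norm_one] at this
  linarith

lemma one_sub_le_norm_of_norm_sub_one_le {x : R} {δ : ℝ} (h : ‖x - 1‖ ≤ δ) : 1 - δ ≤ ‖x‖ := by
  have := norm_sub_norm_le (1 : R) (1 - x)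
  rw [sub_sub_cancel, norm_one, norm_sub_rev] at this
  linarith

lemma exists_norm_mul_le_of_norm_sub_one_le {α : Type*} {s : Set α} {f Q : α → R} {δ : ℝ}
    (hfb : ∃ M, ∀ z ∈ s, ‖f z‖ ≤ M) (hQ : ∀ z ∈ s, ‖Q z - 1‖ ≤ δ) :
    ∃ M, ∀ z ∈ s, ‖f z * Q z‖ ≤ M := by
  obtain ⟨M, hM⟩ := hfb
  refine ⟨M * (1 + δ), fun z hz => (norm_mul_le _ _).trans ?_⟩
  exact mul_le_mul (hM z hz) (norm_le_one_add_of_norm_sub_one_le (hQ z hz)) (norm_nonneg _)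
    ((norm_nonneg (f z)).trans (hM z hz))

end NormSubOne

lemma norm_le_sqrt_sum_norm_sq {ι E : Type*} [Fintype ι] [SeminormedAddGroup E] (d : ι → E)
    (j : ι) : ‖d j‖ ≤ √(∑ i, ‖d i‖ ^ 2) := by
  simpa using Real.abs_le_sqrt (Finset.single_le_sum (f := fun i => ‖d i‖ ^ 2)
    (fun _ _ => by positivity) (Finset.mem_univ j))

lemma abs_hardyNorm_mul_sub_le {f Q : ℂ → ℂ} (hf : ContinuousOn f unitDisk)
    (hfb : ∃ M, ∀ z ∈ unitDisk, ‖f z‖ ≤ M) (hQ : ContinuousOn Q unitDisk) {p δ : ℝ}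
    (hp : 0 < p) (hδ : δ < 1) (hQδ : ∀ z ∈ unitDisk, ‖Q z - 1‖ ≤ δ) :
    |hardyNorm p (fun z => f z * Q z) - hardyNorm p f| ≤ δ * hardyNorm p f := by
  have hδ₀ : 0 ≤ δ := (norm_nonneg _).trans (hQδ 0 (mem_ball_self one_pos))
  have hfQ : ContinuousOn (fun z => f z * Q z) unitDisk := hf.mul hQ
  have hupper : hardyNorm p (fun z => f z * Q z) ≤ (1 + δ) * hardyNorm p f :=
    hardyNorm_le_mul_of_norm_le hf hfb hfQ hp (by linarith) fun z hz => by
      rw [norm_mul, mul_comm]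
      exact mul_le_mul_of_nonneg_right (norm_le_one_add_of_norm_sub_one_le (hQδ z hz))
        (norm_nonneg _)
  have hlower : hardyNorm p f ≤ (1 - δ)⁻¹ * hardyNorm p (fun z => f z * Q z) :=
    hardyNorm_le_mul_of_norm_le hfQ (exists_norm_mul_le_of_norm_sub_one_le hfb hQδ) hf hp
      (inv_nonneg.mpr (by linarith)) fun z hz => by
        rw [le_inv_mul_iff₀ (by linarith), norm_mul, mul_comm ‖f z‖]
        exact mul_le_mul_of_nonneg_right (one_sub_le_norm_of_norm_sub_one_le (hQδ z hz))
          (norm_nonneg (f z))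
  rw [le_inv_mul_iff₀ (by linarith)] at hlower
  rw [abs_le]
  constructor <;> nlinarith [hardyNorm_nonneg p f]

theorem stmt12_general (p : ℝ) (hp : 1 < p) (n : ℕ) (f : ℂ → ℂ)
    (hf : DifferentiableOn ℂ f unitDisk)
    (hb : ∃ M : ℝ, ∀ z ∈ unitDisk, ‖f z‖ ≤ M)
    (hzf : ∀ z ∈ unitDisk, f z ≠ 0) :
    ∃ ε₀ > (0 : ℝ), ∃ C > (0 : ℝ), ∀ ε : ℝ, 0 < ε → ε < ε₀ →
      ∀ d : Fin (n + 1) → ℂ, Real.sqrt (∑ j, ‖d j‖ ^ 2) ≤ ε →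
        ∃ fs : ℂ → ℂ, DifferentiableOn ℂ fs unitDisk ∧
          (∃ M : ℝ, ∀ z ∈ unitDisk, ‖fs z‖ ≤ M) ∧
          (∀ z ∈ unitDisk, fs z ≠ 0) ∧
          (∀ j : Fin (n + 1), coeff fs j = coeff f j + d j) ∧
          |hardyNorm p fs - hardyNorm p f| ≤ C * ε := by
  set T := taylorSeries f
  set K : ℝ := (n + 1) * (∑ i ∈ Finset.range (n + 1), ‖PowerSeries.coeff i T⁻¹‖ + 1)
  have hK : 0 < K := by positivity
  refine ⟨1 / K, by positivity, K * (hardyNorm p f + 1),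
    mul_pos hK (by linarith [hardyNorm_nonneg p f]), fun ε hε hεK d hd => ?_⟩
  set D : PowerSeries ℂ := PowerSeries.mk fun k => if h : k < n + 1 then d ⟨k, h⟩ else 0
  have hD : ∀ k, ‖PowerSeries.coeff k D‖ ≤ ε := fun k => by
    by_cases hk : k < n + 1
    · rw [PowerSeries.coeff_mk, dif_pos hk]
      exact (norm_le_sqrt_sum_norm_sq d ⟨k, hk⟩).trans hd
    · rw [PowerSeries.coeff_mk, dif_neg hk, norm_zero]
      exact hε.le
  set q : Polynomial ℂ := 1 + PowerSeries.trunc (n + 1) (T⁻¹ * D)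
  set δ := ∑ k ∈ Finset.range (n + 1), ‖PowerSeries.coeff k (T⁻¹ * D)‖
  have hδ : δ ≤ K * ε := (PowerSeries.sum_norm_coeff_mul_le _ _ hD n).trans (by
    simp only [K]; nlinarith)
  have hδ₁ : δ < 1 := hδ.trans_lt (by rwa [lt_div_iff₀' hK] at hεK)
  have hq : ∀ z ∈ unitDisk, ‖q.eval z - 1‖ ≤ δ := fun z hz => by
    simpa [q] using PowerSeries.norm_eval_trunc_le _ n (mem_ball_zero_iff.mp hz).le
  have h₀ : (0 : ℂ) ∈ unitDisk := mem_ball_self one_pos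
  refine ⟨fun z => f z * q.eval z, hf.mul q.differentiable.differentiableOn,
    exists_norm_mul_le_of_norm_sub_one_le hb hq,
    fun z hz => mul_ne_zero (hzf z hz) fun hq₀ => by simpa [hq₀] using (hq z hz).trans_lt hδ₁,
    fun j => ?_, ?_⟩
  · rw [coeff_mul_eval_one_add_trunc (hf.analyticAt (isOpen_ball.mem_nhds h₀)) (hzf 0 h₀) D
      (Nat.le_of_lt_succ j.isLt), PowerSeries.coeff_mk, dif_pos j.isLt]
  · calc _ ≤ δ * hardyNorm p f := abs_hardyNorm_mul_sub_le hf.continuousOn hb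
          q.continuous.continuousOn (by linarith) hδ₁ hq
      _ ≤ K * ε * (hardyNorm p f + 1) := by
          gcongr
          · exact hardyNorm_nonneg p f
          · linarith
      _ = K * (hardyNorm p f + 1) * ε := by ring

/-- free perturbation of the first `n+1` Taylor coefficients of a bounded
nonvanishing `H^p` function with small change of the Hardy norm. -/
theorem stmt12 (p : ℝ) (hp : 1 < p) (n : ℕ) (f : ℂ → ℂ)
    (hf : DifferentiableOn ℂ f unitDisk)
    (hb : ∃ M : ℝ, ∀ z ∈ unitDisk, ‖f z‖ ≤ M)
    (hzf : ∀ z ∈ unitDisk, f z ≠ 0)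
    (hnp : ¬ ∃ q : Polynomial ℂ, q.natDegree ≤ n ∧
      Set.EqOn f (fun z => q.eval z) unitDisk) :
    ∃ ε₀ > (0 : ℝ), ∃ C > (0 : ℝ), ∀ ε : ℝ, 0 < ε → ε < ε₀ →
      ∀ d : Fin (n + 1) → ℂ, Real.sqrt (∑ j, ‖d j‖ ^ 2) ≤ ε →
        ∃ fs : ℂ → ℂ, DifferentiableOn ℂ fs unitDisk ∧
          (∃ M : ℝ, ∀ z ∈ unitDisk, ‖fs z‖ ≤ M) ∧
          (∀ z ∈ unitDisk, fs z ≠ 0) ∧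
          (∀ j : Fin (n + 1), coeff fs j = coeff f j + d j) ∧
          |hardyNorm p fs - hardyNorm p f| ≤ C * ε :=
  stmt12_general p hp n f hf hb hzf
end
end

section
/- Let p_N(z) = c₀ + c₁z + … + c_N z^N be a polynomial with c₀ ≠ 0 that has no zeros on the closed unit disk, and assume its Bergman norm satisfies ‖p_N‖_{A₂}² = Σ_{k=0}^N |c_k|²/(k + 1) ≤ 1. Then there exists ε₀ > 0 such that for every ε ∈ (0, ε₀) the polynomial P_{N+1,ε}(z) = (1 − ε)c₀ + c₁z + … + c_N z^N + ε z^{N+1} has no zeros on the closed unit disk and satisfies ‖P_{N+1,ε}‖_{A₂} < ‖p_N‖_{A₂} ≤ 1. -/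
/-!
`P_{N+1,ε} = p_N + ε (z^{N+1} - c₀)`, so it is a small perturbation of `p_N`, and since the
closed disk is compact, `p_N` stays zero-free under it for all small `ε`. The squared Bergman
norm is `‖p_N‖² - 2ε|c₀|² + O(ε²)`, which drops below `‖p_N‖²` for small `ε > 0` as `c₀ ≠ 0`.
-/

open Complex Metric Set Filter Topology

theorem Finset.sum_range_succ_eq_add_sum_Icc {M : Type*} [AddCommMonoid M] (N : ℕ)
    (f : ℕ → M) : ∑ k ∈ Finset.range (N + 1), f k = f 0 + ∑ k ∈ Finset.Icc 1 N, f k := by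
  rw [Finset.range_eq_Ico, Finset.sum_eq_sum_Ico_succ_bot N.add_one_pos, zero_add,
    Finset.Ico_add_one_right_eq_Icc]

theorem IsCompact.eventually_forall_add_smul_ne_zero {X 𝕜 E : Type*} [TopologicalSpace X]
    [TopologicalSpace 𝕜] [Zero 𝕜] [TopologicalSpace E] [AddMonoid E] [ContinuousAdd E]
    [SMulWithZero 𝕜 E] [ContinuousSMul 𝕜 E] [T2Space E] {K : Set X} (hK : IsCompact K)
    {f g : X → E} (hf : Continuous f) (hg : Continuous g) (hf0 : ∀ x ∈ K, f x ≠ 0) :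
    ∀ᶠ ε in 𝓝 (0 : 𝕜), ∀ x ∈ K, f x + ε • g x ≠ 0 := by
  refine hK.eventually_forall_of_forall_eventually fun x hx => ?_
  have hcont : Continuous fun q : 𝕜 × X => f q.2 + q.1 • g q.2 := by fun_prop
  exact hcont.continuousAt.eventually_ne (by simpa using hf0 x hx)

theorem eventually_one_sub_sq_mul_add_sq_div_lt {a b : ℝ} (ha : 0 < a) (hb : 0 < b) :
    ∀ᶠ ε in 𝓝[>] (0 : ℝ), (1 - ε) ^ 2 * a + ε ^ 2 / b < a := by
  filter_upwards [Ioo_mem_nhdsGT (show (0 : ℝ) < 2 * a * b / (a * b + 1) by positivity)]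
    with ε ⟨hε, hεlt⟩
  have hε' : ε * (a * b + 1) < 2 * a * b := (lt_div_iff₀ (by positivity)).mp hεlt
  have hgap : a - ((1 - ε) ^ 2 * a + ε ^ 2 / b) = ε * (2 * a * b - ε * (a * b + 1)) / b := by
    field_simp
    ring
  rw [← sub_pos, hgap]
  exact div_pos (mul_pos hε (by linarith)) hb

theorem stmt17_general (N : ℕ) (c : ℕ → ℂ) (hc0 : c 0 ≠ 0)
    (hz : ∀ z ∈ Metric.closedBall (0 : ℂ) 1,
      (∑ k ∈ Finset.range (N + 1), c k * z ^ k) ≠ 0) :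
    ∃ ε₀ > (0 : ℝ), ∀ ε : ℝ, 0 < ε → ε < ε₀ →
      (∀ z ∈ Metric.closedBall (0 : ℂ) 1,
        ((1 - (ε : ℂ)) * c 0 + (∑ k ∈ Finset.Icc 1 N, c k * z ^ k) +
          (ε : ℂ) * z ^ (N + 1)) ≠ 0) ∧
      Real.sqrt (‖(1 - (ε : ℂ)) * c 0‖ ^ 2 +
          (∑ k ∈ Finset.Icc 1 N, ‖c k‖ ^ 2 / (k + 1)) +
          ε ^ 2 / (N + 2)) <
        Real.sqrt (∑ k ∈ Finset.range (N + 1), ‖c k‖ ^ 2 / (k + 1)) := by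
  have hzero := (isCompact_closedBall (0 : ℂ) 1).eventually_forall_add_smul_ne_zero (𝕜 := ℝ)
    (g := fun z => z ^ (N + 1) - c 0) (by fun_prop) (by fun_prop) hz
  have hnorm := eventually_one_sub_sq_mul_add_sq_div_lt (pow_pos (norm_pos_iff.mpr hc0) 2)
    (by positivity : (0 : ℝ) < N + 2)
  obtain ⟨ε₀, hε₀, hsub⟩ := mem_nhdsGT_iff_exists_Ioo_subset.mp
    ((eventually_nhdsWithin_of_eventually_nhds hzero).and hnorm)
  refine ⟨ε₀, hε₀, fun ε hε hεε₀ => ?_⟩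
  obtain ⟨hεzero, hεnorm⟩ := hsub ⟨hε, hεε₀⟩
  constructor
  · intro z hzball
    convert hεzero z hzball using 1
    rw [Finset.sum_range_succ_eq_add_sum_Icc, Complex.real_smul]
    ring
  · rw [Finset.sum_range_succ_eq_add_sum_Icc]
    apply Real.sqrt_lt_sqrt (by positivity)
    have hscaled : ‖(1 - (ε : ℂ)) * c 0‖ ^ 2 = (1 - ε) ^ 2 * ‖c 0‖ ^ 2 := by
      rw [norm_mul, mul_pow, ← Complex.ofReal_one, ← Complex.ofReal_sub, Complex.norm_real,
        Real.norm_eq_abs, sq_abs]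
    simp only [hscaled, Nat.cast_zero, zero_add, div_one]
    linarith

/-- if `p_N(z) = c₀ + c₁z + ⋯ + c_N z^N` (`c₀ ≠ 0`) has no zeros on the
closed unit disk and Bergman norm `‖p_N‖_{A₂} ≤ 1`, then for all small `ε > 0` the
polynomial `P_{N+1,ε}(z) = (1-ε)c₀ + c₁z + ⋯ + c_N z^N + ε z^{N+1}` is also zero-free on
the closed unit disk and has strictly smaller Bergman norm. -/
theorem stmt17 (N : ℕ) (c : ℕ → ℂ) (hc0 : c 0 ≠ 0)
    (hz : ∀ z ∈ Metric.closedBall (0 : ℂ) 1,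
      (∑ k ∈ Finset.range (N + 1), c k * z ^ k) ≠ 0)
    (hnorm : (∑ k ∈ Finset.range (N + 1), ‖c k‖ ^ 2 / (k + 1)) ≤ 1) :
    ∃ ε₀ > (0 : ℝ), ∀ ε : ℝ, 0 < ε → ε < ε₀ →
      (∀ z ∈ Metric.closedBall (0 : ℂ) 1,
        ((1 - (ε : ℂ)) * c 0 + (∑ k ∈ Finset.Icc 1 N, c k * z ^ k) +
          (ε : ℂ) * z ^ (N + 1)) ≠ 0) ∧
      Real.sqrt (‖(1 - (ε : ℂ)) * c 0‖ ^ 2 +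
          (∑ k ∈ Finset.Icc 1 N, ‖c k‖ ^ 2 / (k + 1)) +
          ε ^ 2 / (N + 2)) <
        Real.sqrt (∑ k ∈ Finset.range (N + 1), ‖c k‖ ^ 2 / (k + 1)) :=
  stmt17_general N c hc0 hz
end
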